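/- For all r > 0, ξ ∈ (0,1), and p ∈ (0,1): Σ_{n ≥ k} C(n,k)·p^k·(1-p)^{n-k}·C(n+r-1,n)·ξ^n·(1-ξ)^r = C(k+r-1,k)·ξ_p^k·(1-ξ_p)^r for every k ≥ 0, where ξ_p = pξ/(1-ξ(1-p)). -/

import Mathlib

/-!
Pulling `C(k+m, k)` into the negative binomial weight gives
`C(k+m, k) · C(k+m+r-1, k+m) = C(k+r-1, k) · C(m+(r+k)-1, m)`, so after factoring out
`(pξ)^k (1-ξ)^r` the sum over `m` is the negative binomial series
`Σ C(m+s-1, m) x^m = (1-x)^(-s)` with `s = r + k` and `x = ξ(1-p)`. That series is Mathlib's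
binomial series once `nbCoef` is identified with `Ring.choose`.
-/

/-- Generalized negative binomial coefficient C(n+r-1, n) = Γ(n+r)/(Γ(n+1)Γ(r)). -/
noncomputable def nbCoef (r : ℝ) (n : ℕ) : ℝ :=
  Real.Gamma (n + r) / (Real.Gamma (n + 1) * Real.Gamma r)

theorem Real.Gamma_add_nat_eq_mul_ascPochhammer {r : ℝ} (hr : 0 < r) (n : ℕ) :
    Real.Gamma (r + n) = Real.Gamma r * (ascPochhammer ℝ n).eval r := by
  induction n with
  | zero => simp
  | succ n ih =>
    rw [Nat.cast_succ, ← add_assoc, Real.Gamma_add_one (by positivity), ih,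
      ascPochhammer_succ_eval]
    ring

theorem nbCoef_eq_ringChoose {r : ℝ} (hr : 0 < r) (n : ℕ) :
    nbCoef r n = Ring.choose (r + n - 1) n := by
  rw [nbCoef, Ring.choose_eq_smul, Polynomial.descPochhammer_smeval_eq_ascPochhammer,
    Polynomial.ascPochhammer_smeval_eq_eval, add_comm (n : ℝ) r,
    Real.Gamma_add_nat_eq_mul_ascPochhammer hr, Real.Gamma_nat_eq_factorial,
    show r + n - 1 - n + 1 = r by ring, smul_eq_mul]
  have := (Real.Gamma_pos_of_pos hr).ne'
  field_simp

theorem hasSum_nbCoef_mul_pow {r x : ℝ} (hr : 0 < r) (hx : |x| < 1) :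
    HasSum (fun n ↦ nbCoef r n * x ^ n) ((1 - x) ^ (-r)) := by
  have h := (Real.one_div_one_sub_rpow_hasFPowerSeriesOnBall_zero r).hasSum
    (y := x) (by simpa [enorm_eq_nnnorm, ← NNReal.coe_lt_coe] using hx)
  have h1 : 0 ≤ 1 - x := by linarith [le_abs_self x]
  simpa [FormalMultilinearSeries.ofScalars_apply_eq, nbCoef_eq_ringChoose hr,
    Real.rpow_neg h1, mul_comm] using h

theorem choose_mul_nbCoef_add {r : ℝ} (hr : 0 < r) (k m : ℕ) :
    ((k + m).choose k : ℝ) * nbCoef r (k + m) = nbCoef r k * nbCoef (r + k) m := by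
  have hΓr := (Real.Gamma_pos_of_pos hr).ne'
  have hΓrk := (Real.Gamma_pos_of_pos (by positivity : 0 < r + k)).ne'
  simp only [nbCoef, Nat.cast_choose ℝ (Nat.le_add_right k m), Nat.add_sub_cancel_left,
    Real.Gamma_nat_eq_factorial]
  rw [show ((k + m : ℕ) : ℝ) + r = m + (r + k) by push_cast; ring, add_comm (k : ℝ) r]
  field_simp

theorem hasSum_choose_mul_nbCoef_add {r x : ℝ} (hr : 0 < r) (hx : |x| < 1) (k : ℕ) :
    HasSum (fun m : ℕ ↦ ((k + m).choose k : ℝ) * nbCoef r (k + m) * x ^ m)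
      (nbCoef r k * (1 - x) ^ (-(r + k))) := by
  simpa only [choose_mul_nbCoef_add hr, mul_assoc] using
    (hasSum_nbCoef_mul_pow (by positivity) hx).mul_left (nbCoef r k)

/-- Binomial thinning identity for the (untruncated) negative binomial:
Σ_{n ≥ k} C(n,k) p^k (1-p)^{n-k} C(n+r-1,n) ξ^n (1-ξ)^r
  = C(k+r-1,k) ξ_p^k (1-ξ_p)^r, where ξ_p = pξ/(1-ξ(1-p)). -/
theorem stmt1 (r ξ p : ℝ) (hr : 0 < r) (hξ : ξ ∈ Set.Ioo (0:ℝ) 1)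
    (hp : p ∈ Set.Ioo (0:ℝ) 1) (k : ℕ) :
    ∑' m : ℕ, ((k + m).choose k : ℝ) * p ^ k * (1 - p) ^ m *
        (nbCoef r (k + m) * ξ ^ (k + m) * (1 - ξ) ^ r)
      = nbCoef r k * (p * ξ / (1 - ξ * (1 - p))) ^ k *
        (1 - p * ξ / (1 - ξ * (1 - p))) ^ r := by
  obtain ⟨hξ0, hξ1⟩ := hξ
  obtain ⟨hp0, hp1⟩ := hp
  set x := ξ * (1 - p)
  have hx0 : 0 < x := by positivity
  have hx1 : x < ξ := mul_lt_of_lt_one_right hξ0 (by linarith)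
  have hx : 0 < 1 - x := by linarith
  have hterm (m : ℕ) : ((k + m).choose k : ℝ) * p ^ k * (1 - p) ^ m *
      (nbCoef r (k + m) * ξ ^ (k + m) * (1 - ξ) ^ r) =
      (p * ξ) ^ k * (1 - ξ) ^ r * (((k + m).choose k : ℝ) * nbCoef r (k + m) * x ^ m) := by
    simp only [x, mul_pow]
    ring
  have hsum := hasSum_choose_mul_nbCoef_add (x := x) hr (abs_lt.2 ⟨by linarith, by linarith⟩) k
  have hthinned : 1 - p * ξ / (1 - x) = (1 - ξ) / (1 - x) := by
    field_simp
    ring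
  rw [tsum_congr hterm, tsum_mul_left, hsum.tsum_eq, hthinned, div_pow,
    Real.div_rpow (by linarith) hx.le, neg_add, Real.rpow_add hx, Real.rpow_neg hx.le, Real.rpow_neg hx.le,
    Real.rpow_natCast]
  ring
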